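/- arXiv:2103.01216 — 3 statements merged into one kernel-verified Lean document; each statement's English description precedes it below -/
import Mathlib

section
/- The in-place scan algorithm is correct: after running Up-Sweep(A,1,n) followed by Down-Sweep(A,1,n,0) on an array A of elements of a monoid, position i of A holds the exclusive prefix sum a_1 ⊕ ... ⊕ a_{i−1} of the original array (with position 1 holding the identity). -/
/-- Up-Sweep(A, s, t): if `s = t` return; otherwise recursively up-sweep the two
halves `[s, k]` and `[k+1, t]` with `k = ⌊(s+t)/2⌋`, then set `A t ← A t + A k`. -/
def upSweep {M : Type*} [AddCommMonoid M] (A : ℕ → M) (s t : ℕ) : ℕ → M :=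
  if _h : s < t then
    let A' := upSweep (upSweep A s ((s + t) / 2)) ((s + t) / 2 + 1) t
    Function.update A' t (A' t + A' ((s + t) / 2))
  else A
termination_by t - s
decreasing_by all_goals omega

/-- Down-Sweep(A, s, t, p): if `s = t` then `A s ← p`; otherwise with
`k = ⌊(s+t)/2⌋` and `L = A k`, recursively down-sweep `[s, k]` with prefix `p` and
`[k+1, t]` with prefix `p + L`. -/
def downSweep {M : Type*} [AddCommMonoid M] (A : ℕ → M) (s t : ℕ) (p : M) : ℕ → M :=
  if _h : s < t then
    downSweep (downSweep A s ((s + t) / 2) p) ((s + t) / 2 + 1) t (p + A ((s + t) / 2))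
  else Function.update A s p
termination_by t - s
decreasing_by all_goals omega

/-- upSweep only modifies indices in `(s, t]`. -/
theorem upSweep_out {M : Type*} [AddCommMonoid M] (A : ℕ → M) (s t i : ℕ)
    (h : i < s ∨ t < i) : upSweep A s t i = A i := by
  rw [upSweep]
  split
  · rename_i hst
    dsimp only
    rw [Function.update_of_ne (by omega)]
    rw [upSweep_out _ _ _ _ (by omega), upSweep_out _ _ _ _ (by omega)]
  · rfl
termination_by t - s
decreasing_by all_goals omega

/-- downSweep only modifies indices in `[s, t]`. -/
theorem downSweep_out {M : Type*} [AddCommMonoid M] (A : ℕ → M) (s t i : ℕ) (p : M)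
    (hst : s ≤ t) (h : i < s ∨ t < i) : downSweep A s t p i = A i := by
  rw [downSweep]
  split
  · rename_i h2
    rw [downSweep_out _ _ _ _ _ (by omega) (by omega),
        downSweep_out _ _ _ _ _ (by omega) (by omega)]
  · rename_i h2
    rw [Function.update_of_ne (by omega)]
termination_by t - s
decreasing_by all_goals omega

/-- upSweep puts at position `t` the sum of `A` over `[s, t]`. -/
theorem upSweep_at {M : Type*} [AddCommMonoid M] (A : ℕ → M) (s t : ℕ) (hst : s ≤ t) :
    upSweep A s t t = ∑ j ∈ Finset.Icc s t, A j := by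
  rw [upSweep]
  split
  · rename_i h2
    dsimp only
    rw [Function.update_self]
    set k := (s + t) / 2 with hk
    have h1 : upSweep (upSweep A s k) (k + 1) t t = ∑ j ∈ Finset.Icc (k+1) t, A j := by
      rw [upSweep_at _ _ _ (by omega)]
      exact Finset.sum_congr rfl fun j hj => by
        simp only [Finset.mem_Icc] at hj
        exact upSweep_out _ _ _ _ (by omega)
    have h2' : upSweep (upSweep A s k) (k + 1) t k = ∑ j ∈ Finset.Icc s k, A j := by
      rw [upSweep_out _ _ _ _ (by omega), upSweep_at _ _ _ (by omega)]
    rw [h1, h2', add_comm]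
    rw [← Finset.Ico_add_one_right_eq_Icc s k, ← Finset.Ico_add_one_right_eq_Icc (k+1) t, ← Finset.Ico_add_one_right_eq_Icc s t]
    exact Finset.sum_Ico_consecutive _ (by omega) (by omega)
  · rename_i h2
    have : s = t := by omega
    subst this
    simp
termination_by t - s
decreasing_by all_goals omega

/-- upSweep depends only on the values of the array on `[s, t]`. -/
theorem upSweep_congr {M : Type*} [AddCommMonoid M] (A B : ℕ → M) (s t : ℕ)
    (hAB : ∀ j, s ≤ j → j ≤ t → A j = B j) (i : ℕ) (hi1 : s ≤ i) (hi2 : i ≤ t) :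
    upSweep A s t i = upSweep B s t i := by
  by_cases h2 : s < t
  · conv_lhs => rw [upSweep]
    conv_rhs => rw [upSweep]
    rw [dif_pos h2, dif_pos h2]
    set k := (s + t) / 2 with hk
    have houter : ∀ j, k + 1 ≤ j → j ≤ t →
        upSweep (upSweep A s k) (k+1) t j = upSweep (upSweep B s k) (k+1) t j := by
      intro j hj1 hj2
      refine upSweep_congr _ _ _ _ (fun j' hj1' hj2' => ?_) j hj1 hj2
      rw [upSweep_out _ _ _ _ (by omega), upSweep_out _ _ _ _ (by omega)]
      exact hAB j' (by omega) hj2'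
    have hinner : ∀ j, s ≤ j → j ≤ k →
        upSweep (upSweep A s k) (k+1) t j = upSweep (upSweep B s k) (k+1) t j := by
      intro j hj1 hj2
      rw [upSweep_out (upSweep A s k) (k+1) t j (by omega),
          upSweep_out (upSweep B s k) (k+1) t j (by omega)]
      exact upSweep_congr _ _ _ _ (fun j' hj1' hj2' => hAB j' hj1' (by omega)) j hj1 hj2
    rcases eq_or_ne i t with h | hne
    · rw [h]
      rw [Function.update_self, Function.update_self,
        houter t (by omega) le_rfl, hinner k (by omega) le_rfl]
    · rw [Function.update_of_ne hne, Function.update_of_ne hne]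
      rcases le_or_gt i k with h | h
      · exact hinner i hi1 h
      · exact houter i (by omega) (by omega)
  · conv_lhs => rw [upSweep]
    conv_rhs => rw [upSweep]
    rw [dif_neg h2, dif_neg h2]
    exact hAB i hi1 hi2
termination_by t - s
decreasing_by all_goals omega

/-- downSweep depends only on the values of the array on `[s, t)` (for outputs in `[s,t]`). -/
theorem downSweep_congr {M : Type*} [AddCommMonoid M] (A B : ℕ → M) (s t : ℕ) (p : M)
    (hAB : ∀ j, s ≤ j → j < t → A j = B j) (i : ℕ) (hi1 : s ≤ i) (hi2 : i ≤ t) :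
    downSweep A s t p i = downSweep B s t p i := by
  by_cases h2 : s < t
  · conv_lhs => rw [downSweep]
    conv_rhs => rw [downSweep]
    rw [dif_pos h2, dif_pos h2]
    set k := (s + t) / 2 with hk
    have hmid : A k = B k := hAB k (by omega) (by omega)
    rw [hmid]
    rcases le_or_gt i k with h | h
    · rw [downSweep_out (downSweep A s k p) (k+1) t i _ (by omega) (by omega),
          downSweep_out (downSweep B s k p) (k+1) t i _ (by omega) (by omega)]
      exact downSweep_congr _ _ _ _ _ (fun j hj1 hj2 => hAB j hj1 (by omega)) i hi1 h
    · refine downSweep_congr _ _ _ _ _ (fun j hj1 hj2 => ?_) i (by omega) hi2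
      rw [downSweep_out _ _ _ _ _ (by omega) (by omega),
          downSweep_out _ _ _ _ _ (by omega) (by omega)]
      exact hAB j (by omega) hj2
  · conv_lhs => rw [downSweep]
    conv_rhs => rw [downSweep]
    rw [dif_neg h2, dif_neg h2]
    have : s = i := by omega
    subst this
    rw [Function.update_self, Function.update_self]
termination_by t - s
decreasing_by all_goals omega

/-- The key correctness lemma for the scan on an arbitrary interval. -/
theorem scan_key {M : Type*} [AddCommMonoid M] (A : ℕ → M) (s t : ℕ) (p : M)
    (hst : s ≤ t) (i : ℕ) (hi1 : s ≤ i) (hi2 : i ≤ t) :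
    downSweep (upSweep A s t) s t p i = p + ∑ j ∈ Finset.Ico s i, A j := by
  by_cases h2 : s < t
  · conv_lhs => rw [upSweep, dif_pos h2]
    conv_lhs => rw [downSweep, dif_pos h2]
    dsimp only
    set k := (s + t) / 2 with hk
    set up := upSweep (upSweep A s k) (k+1) t with hup
    set U := Function.update up t (up t + up k) with hU
    have hUk : U k = ∑ j ∈ Finset.Icc s k, A j := by
      rw [hU, Function.update_of_ne (by omega), hup,
        upSweep_out _ _ _ _ (by omega), upSweep_at _ _ _ (by omega)]
    rcases le_or_gt i k with h | h
    · rw [downSweep_out _ _ _ _ _ (by omega) (by omega)]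
      have := downSweep_congr U (upSweep A s k) s k p (fun j hj1 hj2 => by
        rw [hU, Function.update_of_ne (by omega), hup,
          upSweep_out _ _ _ _ (by omega)]) i hi1 h
      rw [this]
      exact scan_key A s k p (by omega) i hi1 h
    · have hcongr := downSweep_congr (downSweep U s k p) (upSweep A (k+1) t) (k+1) t
        (p + U k) (fun j hj1 hj2 => by
          rw [downSweep_out _ _ _ _ _ (by omega) (by omega), hU,
            Function.update_of_ne (by omega), hup]
          exact upSweep_congr _ _ _ _ (fun j' hj1' hj2' =>
            upSweep_out _ _ _ _ (by omega)) j hj1 (by omega)) i (by omega) hi2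
      rw [hcongr, scan_key A (k+1) t (p + U k) (by omega) i (by omega) hi2, hUk,
        add_assoc]
      congr 1
      rw [← Finset.Ico_add_one_right_eq_Icc s k]
      exact Finset.sum_Ico_consecutive _ (by omega) (by omega)
  · rw [downSweep, dif_neg h2]
    have h3 : s = i := by omega
    subst h3
    simp
termination_by t - s
decreasing_by all_goals omega

/-- Correctness of the in-place scan: after `Up-Sweep(A,1,n)` followed by
`Down-Sweep(A,1,n,0)`, position `i` holds the exclusive prefix sum
`A 1 + ... + A (i-1)` of the original array (position `1` holds the identity `0`). -/
theorem inPlaceScan_correct {M : Type*} [AddCommMonoid M] (A : ℕ → M) (n : ℕ)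
    (hn : 1 ≤ n) :
    ∀ i : ℕ, 1 ≤ i → i ≤ n →
      downSweep (upSweep A 1 n) 1 n 0 i = ∑ j ∈ Finset.Ico 1 i, A j := by
  intro i hi1 hi2
  rw [scan_key A 1 n 0 hn i hi1 hi2, zero_add]
end

section
/- The expected number of rounds of parallel list contraction (contracting all local minima each round, under a uniformly random assignment of distinct priorities) is O(log n): with probability at least 1 − n^{−c}, the number of rounds is at most C·c·log n for suitable constant C. -/
open scoped Classical

/-- Whether position `j` of the list `l` of priorities is a local minimum
(ends only compare with their single neighbor; sentinels have priority `+∞`). -/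
noncomputable def lminB (l : List ℝ) (j : ℕ) : Bool :=
  (decide (j = 0) || decide (l.getD j 0 < l.getD (j - 1) 0)) &&
  (decide (j = l.length - 1) || decide (l.getD j 0 < l.getD (j + 1) 0))

/-- One round of parallel list contraction: simultaneously splice out all
elements whose priority is a local minimum relative to its current neighbors. -/
noncomputable def contractStep (l : List ℝ) : List ℝ :=
  ((List.range l.length).filter (fun j => !(lminB l j))).map (fun j => l.getD j 0)

/-- The number of rounds until the list is fully contracted. -/
noncomputable def contractRounds (l : List ℝ) : ℕ :=
  sInf {t : ℕ | contractStep^[t] l = []}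

/-!
Say that position `a` of a list dominates position `b` when the entry at `a` is the strict
maximum of the list on the interval between `a` and `b`. Dominance is transitive; a survivor of a
round dominates a neighbour smaller than itself; and dominance between survivors in the contracted
list already holds in the original list, because the removed entries are local minima and hence
never the maximum of an interval containing both of their neighbours. By induction on `t`, if the
list is nonempty after `t` rounds, then some position is dominated by `t` others.

With priorities given by a uniform permutation `σ`, `a` given positions `j` on one side of `i` are
all records (`σ j` the maximum of `σ` on `[j, i]`) with probability at most `∏ 1 / |[j, i]|`: the
map `(σ, c) ↦ σ ∘ swap j₀ c`, where `j₀` is the record nearest to `i` and `c ∈ [j₀, i]`, is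
injective. Summing over all `a`-sets bounds the probability of `a` records on one side by
`(∑ⱼ 1 / |[j, i]|)^a / a! ≤ (log n)^a / a!`, and a union bound over `i` and both sides, with
`a = ⌈9 c log n⌉`, shows that more than `2a` rounds occur with probability at most `n^(-c)`.
-/

open Finset
open scoped Nat

noncomputable def survivors (l : List ℝ) : List ℕ :=
  (List.range l.length).filter (fun j => !lminB l j)

structure Dominates (l : List ℝ) (a b : ℕ) : Prop where
  left_lt_length : a < l.length
  right_lt_length : b < l.length
  ne : a ≠ b
  getD_lt_of_mem_uIcc : ∀ m ∈ Set.uIcc a b, m ≠ a → l.getD m 0 < l.getD a 0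

section Contraction

variable {l : List ℝ}

theorem Dominates.getD_lt {a b : ℕ} (h : Dominates l a b) : l.getD b 0 < l.getD a 0 :=
  h.getD_lt_of_mem_uIcc b Set.right_mem_uIcc h.ne.symm

theorem Dominates.trans {a b c : ℕ} (hab : Dominates l a b) (hbc : Dominates l b c) :
    Dominates l a c := by
  have hba := hab.getD_lt
  refine ⟨hab.left_lt_length, hbc.right_lt_length, ?_, fun m hm hma => ?_⟩
  · rintro rfl
    exact (hbc.getD_lt_of_mem_uIcc a Set.right_mem_uIcc hab.ne).asymm hba
  rcases Set.uIcc_subset_uIcc_union_uIcc hm with hm | hm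
  · exact hab.getD_lt_of_mem_uIcc m hm hma
  · rcases eq_or_ne m b with rfl | hmb
    · exact hba
    · exact (hbc.getD_lt_of_mem_uIcc m hm hmb).trans hba

theorem contractStep_eq_map_survivors (l : List ℝ) :
    contractStep l = (survivors l).map (l.getD · 0) := rfl

theorem length_contractStep (l : List ℝ) : (contractStep l).length = (survivors l).length :=
  List.length_map _

theorem mem_survivors {j : ℕ} : j ∈ survivors l ↔ j < l.length ∧ lminB l j = false := by
  simp [survivors]

theorem sortedLT_survivors (l : List ℝ) : (survivors l).SortedLT :=
  (List.pairwise_lt_range.filter _).sortedLT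

theorem getD_contractStep {p : ℕ} (hp : p < (survivors l).length) :
    (contractStep l).getD p 0 = l.getD (survivors l)[p] 0 := by
  simp [contractStep_eq_map_survivors, hp]

theorem nodup_contractStep (hl : l.Nodup) : (contractStep l).Nodup := by
  refine (sortedLT_survivors l).nodup.map_on fun x hx y hy hxy => ?_
  have hx := (mem_survivors.mp hx).1
  have hy := (mem_survivors.mp hy).1
  simp only [List.getD_eq_getElem _ 0 hx, List.getD_eq_getElem _ 0 hy] at hxy
  exact (hl.getElem_inj_iff).mp hxy

theorem lt_getD_pred_of_lminB {m : ℕ} (h : lminB l m = true) (hm : m ≠ 0) :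
    l.getD m 0 < l.getD (m - 1) 0 := by
  simp_all [lminB]

theorem lt_getD_succ_of_lminB {m : ℕ} (h : lminB l m = true) (hm : m ≠ l.length - 1) :
    l.getD m 0 < l.getD (m + 1) 0 := by
  simp_all [lminB]

theorem exists_dominates_of_mem_survivors (hl : l.Nodup) {j : ℕ} (hj : j ∈ survivors l) :
    ∃ b, Dominates l j b := by
  obtain ⟨hjl, hmin⟩ := mem_survivors.mp hj
  have dominates_neighbor : ∀ b < l.length, b ≠ j → (∀ m ∈ Set.uIcc j b, m ≠ j → m = b) →
      ¬ l.getD j 0 < l.getD b 0 → Dominates l j b := fun b hb hbj hadj hlt => by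
    refine ⟨hjl, hb, hbj.symm, fun m hm hmj => ?_⟩
    obtain rfl := hadj m hm hmj
    refine (not_lt.mp hlt).lt_of_ne fun he => hbj ?_
    rwa [List.getD_eq_getElem _ 0 hb, List.getD_eq_getElem _ 0 hjl, hl.getElem_inj_iff] at he
  simp only [lminB, Bool.and_eq_false_iff, Bool.or_eq_false_iff, decide_eq_false_iff_not] at hmin
  rcases hmin with ⟨h0, hlt⟩ | ⟨hlast, hlt⟩
  · refine ⟨j - 1, dominates_neighbor _ (by omega) (by omega) (fun m hm _ => ?_) hlt⟩
    rw [Set.mem_uIcc] at hm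
    omega
  · refine ⟨j + 1, dominates_neighbor _ (by omega) (by omega) (fun m hm _ => ?_) hlt⟩
    rw [Set.mem_uIcc] at hm
    omega

theorem exists_mem_survivors_isMaxOn {A B : ℕ} (hA : A < l.length) (hB : B ∈ survivors l)
    (hAB : A ≠ B) :
    ∃ m₀ ∈ survivors l, m₀ ∈ Set.uIcc A B \ {A} ∧
      IsMaxOn (l.getD · 0) (Set.uIcc A B \ {A}) m₀ := by
  have hBK : B ∈ Set.uIcc A B \ {A} := ⟨Set.right_mem_uIcc, hAB.symm⟩
  obtain ⟨m₀, hm₀, hmax⟩ := Set.exists_max_image (Set.uIcc A B \ {A}) (l.getD · 0)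
    (Set.finite_uIcc A B).sdiff ⟨B, hBK⟩
  refine ⟨m₀, ?_, hm₀, isMaxOn_iff.mpr hmax⟩
  by_contra hm₀s
  have hBl := (mem_survivors.mp hB).1
  obtain ⟨hm₀I, hm₀A⟩ := hm₀
  rw [Set.mem_uIcc] at hm₀I
  replace hm₀A : m₀ ≠ A := hm₀A
  have hm₀B : m₀ ≠ B := by rintro rfl; exact hm₀s hB
  have hlmin : lminB l m₀ = true := by
    simpa [mem_survivors, show m₀ < l.length by omega] using hm₀s
  by_cases hpred : m₀ - 1 = A
  · have hsucc : m₀ + 1 ∈ Set.uIcc A B \ {A} := ⟨by rw [Set.mem_uIcc]; omega, by simp; omega⟩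
    exact (hmax _ hsucc).not_gt (lt_getD_succ_of_lminB hlmin (by omega))
  · have hpred' : m₀ - 1 ∈ Set.uIcc A B \ {A} := ⟨by rw [Set.mem_uIcc]; omega, hpred⟩
    exact (hmax _ hpred').not_gt (lt_getD_pred_of_lminB hlmin (by omega))

theorem Dominates.of_contractStep {p q : ℕ} (h : Dominates (contractStep l) p q) :
    Dominates l ((survivors l).getD p 0) ((survivors l).getD q 0) := by
  obtain ⟨hp, hq, hpq, hdom⟩ := h
  rw [length_contractStep] at hp hq
  have hs := sortedLT_survivors l
  rw [List.getD_eq_getElem _ 0 hp, List.getD_eq_getElem _ 0 hq]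
  have hAB : (survivors l)[p] ≠ (survivors l)[q] := by simpa [hs.nodup.getElem_inj_iff]
  have hA := (mem_survivors.mp (List.getElem_mem hp)).1
  obtain ⟨m₀, hm₀s, ⟨hm₀I, hm₀A⟩, hmax⟩ :=
    exists_mem_survivors_isMaxOn hA (List.getElem_mem hq) hAB
  obtain ⟨p', hp', rfl⟩ := List.getElem_of_mem hm₀s
  have hp'I : p' ∈ Set.uIcc p q := by
    simpa only [Set.mem_uIcc, hs.getElem_le_getElem_iff] using hm₀I
  have hlt := hdom p' hp'I (by rintro rfl; exact hm₀A rfl)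
  rw [getD_contractStep hp', getD_contractStep hp] at hlt
  exact ⟨hA, (mem_survivors.mp (List.getElem_mem hq)).1, hAB,
    fun m hm hmA => (isMaxOn_iff.mp hmax m ⟨hm, hmA⟩).trans_lt hlt⟩

theorem exists_finset_dominates_of_iterate_ne_nil (t : ℕ) {l : List ℝ} (hl : l.Nodup)
    (h : contractStep^[t] l ≠ []) :
    ∃ i < l.length, ∃ S : Finset ℕ, #S = t ∧ ∀ j ∈ S, Dominates l j i := by
  induction t generalizing l with
  | zero => exact ⟨0, List.length_pos_iff.mpr h, ∅, rfl, by simp⟩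
  | succ t ih =>
    rw [Function.iterate_succ_apply] at h
    obtain ⟨i', hi', S', hcard, hdom⟩ := ih (nodup_contractStep hl) h
    rw [length_contractStep] at hi'
    set F : ℕ → ℕ := fun p => (survivors l).getD p 0
    have hlt : ∀ p ∈ S', p < (survivors l).length := fun p hp => by
      simpa [length_contractStep] using (hdom p hp).left_lt_length
    have hFinj : Set.InjOn F {p | p < (survivors l).length} := fun p hp q hq hpq => by
      simp only [F] at hpq
      rw [List.getD_eq_getElem _ 0 hp, List.getD_eq_getElem _ 0 hq] at hpq
      exact (sortedLT_survivors l).nodup.getElem_inj_iff.mp hpq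
    have hFi' : F i' ∈ survivors l := by
      simp only [F]
      rw [List.getD_eq_getElem _ 0 hi']
      exact List.getElem_mem hi'
    obtain ⟨b, hb⟩ := exists_dominates_of_mem_survivors hl hFi'
    have hFi'_notMem : F i' ∉ S'.image F := by
      simp only [mem_image, not_exists, not_and]
      exact fun p hp hpi' => (hdom p hp).ne (hFinj (hlt p hp) hi' hpi')
    refine ⟨b, hb.right_lt_length, insert (F i') (S'.image F), ?_, ?_⟩
    · rw [card_insert_of_notMem hFi'_notMem, card_image_of_injOn (hFinj.mono hlt), hcard]
    · simp only [mem_insert, mem_image]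
      rintro j (rfl | ⟨p, hp, rfl⟩)
      · exact hb
      · exact (hdom p hp).of_contractStep.trans hb

end Contraction

theorem sum_Icc_two_inv_le_log (N : ℕ) : ∑ k ∈ Icc 2 N, (k : ℝ)⁻¹ ≤ Real.log N := by
  rcases N.eq_zero_or_pos with rfl | hN
  · simp
  have h := harmonic_le_one_add_log N
  rw [harmonic_eq_sum_Icc, ← insert_Icc_add_one_left_eq_Icc hN, sum_insert (by simp)] at h
  push_cast at h
  linarith

theorem sum_powersetCard_succ_sum_erase {ι M : Type*} [DecidableEq ι] [AddCommMonoid M]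
    (T : Finset ι) (a : ℕ) (g : Finset ι → ι → M) :
    ∑ S ∈ powersetCard (a + 1) T, ∑ j ∈ S, g (S.erase j) j =
      ∑ R ∈ powersetCard a T, ∑ j ∈ T \ R, g R j := by
  rw [sum_sigma', sum_sigma']
  refine sum_nbij' (fun p => ⟨p.1.erase p.2, p.2⟩) (fun p => ⟨insert p.2 p.1, p.2⟩)
    ?_ ?_ ?_ ?_ ?_
  · rintro ⟨S, j⟩ hp
    simp only [mem_sigma, mem_powersetCard] at hp ⊢
    obtain ⟨⟨hST, hcard⟩, hj⟩ := hp
    refine ⟨⟨(erase_subset _ _).trans hST, by rw [card_erase_of_mem hj, hcard]; rfl⟩, ?_⟩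
    exact mem_sdiff.mpr ⟨hST hj, notMem_erase _ _⟩
  · rintro ⟨R, j⟩ hp
    simp only [mem_sigma, mem_powersetCard, mem_sdiff] at hp ⊢
    obtain ⟨⟨hRT, hcard⟩, hjT, hjR⟩ := hp
    exact ⟨⟨insert_subset hjT hRT, by rw [card_insert_of_notMem hjR, hcard]⟩, mem_insert_self _ _⟩
  · rintro ⟨S, j⟩ hp
    simp only [mem_sigma] at hp
    simp [insert_erase hp.2]
  · rintro ⟨R, j⟩ hp
    simp only [mem_sigma, mem_sdiff] at hp
    simp [erase_insert hp.2.2]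
  · intro _ _; rfl

theorem succ_mul_sum_powersetCard_succ_prod_le {ι : Type*} [DecidableEq ι] (T : Finset ι)
    {f : ι → ℝ} (hf : ∀ j ∈ T, 0 ≤ f j) (a : ℕ) :
    (a + 1) * ∑ S ∈ powersetCard (a + 1) T, ∏ j ∈ S, f j ≤
      (∑ j ∈ T, f j) * ∑ R ∈ powersetCard a T, ∏ j ∈ R, f j := by
  calc (a + 1) * ∑ S ∈ powersetCard (a + 1) T, ∏ j ∈ S, f j
      = ∑ S ∈ powersetCard (a + 1) T, ∑ j ∈ S, f j * ∏ x ∈ S.erase j, f x := by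
        rw [mul_sum]
        refine sum_congr rfl fun S hS => ?_
        rw [sum_congr rfl fun j hj => mul_prod_erase S f hj, sum_const,
          (mem_powersetCard.mp hS).2, nsmul_eq_mul]
        push_cast; rfl
    _ = ∑ R ∈ powersetCard a T, (∑ j ∈ T \ R, f j) * ∏ x ∈ R, f x := by
        rw [sum_powersetCard_succ_sum_erase T a fun R j => f j * ∏ x ∈ R, f x]
        simp only [sum_mul]
    _ ≤ ∑ R ∈ powersetCard a T, (∑ j ∈ T, f j) * ∏ x ∈ R, f x := by
        refine sum_le_sum fun R hR => mul_le_mul_of_nonneg_right ?_ ?_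
        · exact sum_le_sum_of_subset_of_nonneg sdiff_subset fun j hj _ => hf j hj
        · exact prod_nonneg fun j hj => hf j ((mem_powersetCard.mp hR).1 hj)
    _ = _ := by rw [mul_sum]

theorem factorial_mul_sum_powersetCard_prod_le_pow {ι : Type*} [DecidableEq ι] (T : Finset ι)
    {f : ι → ℝ} (hf : ∀ j ∈ T, 0 ≤ f j) (a : ℕ) :
    a ! * ∑ S ∈ powersetCard a T, ∏ j ∈ S, f j ≤ (∑ j ∈ T, f j) ^ a := by
  induction a with
  | zero => simp
  | succ a ih =>
    have hsum := sum_nonneg hf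
    calc ((a + 1) ! : ℝ) * ∑ S ∈ powersetCard (a + 1) T, ∏ j ∈ S, f j
        = a ! * ((a + 1) * ∑ S ∈ powersetCard (a + 1) T, ∏ j ∈ S, f j) := by
          push_cast [Nat.factorial_succ]; ring
      _ ≤ a ! * ((∑ j ∈ T, f j) * ∑ R ∈ powersetCard a T, ∏ j ∈ R, f j) :=
          mul_le_mul_of_nonneg_left (succ_mul_sum_powersetCard_succ_prod_le T hf a)
            (by positivity)
      _ = (∑ j ∈ T, f j) * (a ! * ∑ R ∈ powersetCard a T, ∏ j ∈ R, f j) := by ring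
      _ ≤ (∑ j ∈ T, f j) * (∑ j ∈ T, f j) ^ a := by gcongr
      _ = (∑ j ∈ T, f j) ^ (a + 1) := by ring

theorem Equiv.swap_apply_mem {α : Type*} [DecidableEq α] {s : Set α} {a c x : α} (ha : a ∈ s)
    (hc : c ∈ s) (hx : x ∈ s) : Equiv.swap a c x ∈ s := by
  rw [Equiv.swap_apply_def]
  split_ifs <;> assumption

theorem IsMaxOn.swap_trans {α β : Type*} [DecidableEq α] [Preorder β] {σ : α ≃ β} {s : Set α}
    {a c x : α} (h : IsMaxOn σ s x) (ha : a ∈ s) (hc : c ∈ s) :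
    IsMaxOn ((Equiv.swap a c).trans σ) s (Equiv.swap a c x) :=
  isMaxOn_iff.mpr fun y hy => by
    simpa using isMaxOn_iff.mp h _ (Equiv.swap_apply_mem ha hc hy)

section Records

variable {α β : Type*} [Fintype α] [LinearOrder α] [Fintype β] [LinearOrder β]

variable (β) in
noncomputable def recordsBefore [LocallyFiniteOrderBot α] (i : α) (a : ℕ) : Finset (α ≃ β) :=
  {σ | ∃ S ⊆ Iio i, #S = a ∧ ∀ j ∈ S, IsMaxOn σ (Set.Icc j i) j}

variable (β) in
noncomputable def recordsAfter [LocallyFiniteOrderTop α] (i : α) (a : ℕ) : Finset (α ≃ β) :=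
  {σ | ∃ S ⊆ Ioi i, #S = a ∧ ∀ j ∈ S, IsMaxOn σ (Set.Icc i j) j}

theorem mem_recordsBefore [LocallyFiniteOrderBot α] {σ : α ≃ β} {i : α} {a : ℕ} :
    σ ∈ recordsBefore β i a ↔ ∃ S ⊆ Iio i, #S = a ∧ ∀ j ∈ S, IsMaxOn σ (Set.Icc j i) j := by
  simp [recordsBefore]

theorem mem_recordsAfter [LocallyFiniteOrderTop α] {σ : α ≃ β} {i : α} {a : ℕ} :
    σ ∈ recordsAfter β i a ↔ ∃ S ⊆ Ioi i, #S = a ∧ ∀ j ∈ S, IsMaxOn σ (Set.Icc i j) j := by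
  simp [recordsAfter]

variable [LocallyFiniteOrder α]

theorem card_forall_isMaxOn_Icc_insert_mul_le {i a : α} {S : Finset α} (hS : ∀ j ∈ S, j < a) :
    #{σ : α ≃ β | ∀ j ∈ insert a S, IsMaxOn σ (Set.Icc j i) j} * #(Icc a i) ≤
      #{σ : α ≃ β | ∀ j ∈ S, IsMaxOn σ (Set.Icc j i) j} := by
  rw [← card_product]
  -- `c` is recovered from `σ ∘ swap a c` as the position of its maximum on `[a, i]`.
  refine card_le_card_of_injOn (fun p => (Equiv.swap a p.2).trans p.1) ?_ ?_
  · rintro ⟨σ, c⟩ hp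
    simp only [coe_product, Set.mem_prod, coe_filter, Set.mem_ofPred_eq, mem_univ, true_and,
      coe_Icc, forall_mem_insert] at hp ⊢
    obtain ⟨⟨-, hσ⟩, hac, hci⟩ := hp
    intro j hj
    have hja := hS j hj
    have := (hσ j hj).swap_trans (a := a) (c := c) ⟨hja.le, hac.trans hci⟩ ⟨hja.le.trans hac, hci⟩
    rwa [Equiv.swap_apply_of_ne_of_ne hja.ne (hja.trans_le hac).ne] at this
  · rintro ⟨σ₁, c₁⟩ h₁ ⟨σ₂, c₂⟩ h₂ heq
    simp only [coe_product, Set.mem_prod, coe_filter, Set.mem_ofPred_eq, mem_univ, true_and,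
      coe_Icc, forall_mem_insert] at h₁ h₂ heq
    have hmax₁ := h₁.1.1.swap_trans (Set.left_mem_Icc.mpr (h₁.2.1.trans h₁.2.2)) h₁.2
    have hmax₂ := h₂.1.1.swap_trans (Set.left_mem_Icc.mpr (h₂.2.1.trans h₂.2.2)) h₂.2
    rw [Equiv.swap_apply_left, heq] at hmax₁
    rw [Equiv.swap_apply_left] at hmax₂
    obtain rfl : c₁ = c₂ := ((Equiv.swap a c₂).trans σ₂).injective <|
      le_antisymm (isMaxOn_iff.mp hmax₂ c₁ h₁.2) (isMaxOn_iff.mp hmax₁ c₂ h₂.2)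
    refine Prod.ext (Equiv.ext fun x => ?_) rfl
    simpa using congr($heq (Equiv.swap a c₁ x))

theorem card_forall_isMaxOn_Icc_mul_prod_le (i : α) (S : Finset α) :
    #{σ : α ≃ β | ∀ j ∈ S, IsMaxOn σ (Set.Icc j i) j} * ∏ j ∈ S, #(Icc j i) ≤
      Fintype.card (α ≃ β) := by
  induction S using Finset.induction_on_max with
  | empty => simp
  | insert a S hS ih =>
    rw [prod_insert fun h => (hS a h).false, ← mul_assoc]
    exact (Nat.mul_le_mul_right _ (card_forall_isMaxOn_Icc_insert_mul_le hS)).trans ih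

theorem sum_Iio_inv_card_Icc_le_log [LocallyFiniteOrderBot α] (i : α) :
    ∑ j ∈ Iio i, (#(Icc j i) : ℝ)⁻¹ ≤ Real.log (Fintype.card α) := by
  have hinj : Set.InjOn (fun j => #(Icc j i)) (Iio i) := by
    intro j₁ hj₁ j₂ hj₂ heq
    by_contra hne
    rcases lt_or_gt_of_ne hne with hlt | hlt
    · exact (card_lt_card (Icc_ssubset_Icc_left (mem_Iio.mp hj₁).le hlt le_rfl)).ne' heq
    · exact (card_lt_card (Icc_ssubset_Icc_left (mem_Iio.mp hj₂).le hlt le_rfl)).ne heq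
  have hmaps : ∀ j ∈ Iio i, #(Icc j i) ∈ Icc 2 (Fintype.card α) := fun j hj => by
    have hji := mem_Iio.mp hj
    refine mem_Icc.mpr ⟨?_, card_le_univ _⟩
    calc 2 = #{j, i} := (card_pair hji.ne).symm
      _ ≤ #(Icc j i) := card_le_card (by simp [insert_subset_iff, hji.le])
  calc ∑ j ∈ Iio i, (#(Icc j i) : ℝ)⁻¹ = ∑ k ∈ (Iio i).image (fun j => #(Icc j i)), (k : ℝ)⁻¹ :=
        (sum_image (f := fun k : ℕ => (k : ℝ)⁻¹) hinj).symm
    _ ≤ ∑ k ∈ Icc 2 (Fintype.card α), (k : ℝ)⁻¹ :=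
        sum_le_sum_of_subset_of_nonneg (image_subset_iff.mpr hmaps) fun _ _ _ => by positivity
    _ ≤ Real.log (Fintype.card α) := sum_Icc_two_inv_le_log _

theorem card_recordsBefore_mul_factorial_le [LocallyFiniteOrderBot α] (i : α) (a : ℕ) :
    (#(recordsBefore β i a) : ℝ) * a ! ≤
      Fintype.card (α ≃ β) * Real.log (Fintype.card α) ^ a := by
  set f : α → ℝ := fun j => (#(Icc j i) : ℝ)⁻¹
  have hunion : (#(recordsBefore β i a) : ℝ) ≤
      ∑ S ∈ powersetCard a (Iio i), (#{σ : α ≃ β | ∀ j ∈ S, IsMaxOn σ (Set.Icc j i) j} : ℝ) := by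
    norm_cast
    refine (card_le_card fun σ hσ => ?_).trans card_biUnion_le
    obtain ⟨S, hS, hcard, hmax⟩ := mem_recordsBefore.mp hσ
    exact mem_biUnion.mpr ⟨S, mem_powersetCard.mpr ⟨hS, hcard⟩, mem_filter.mpr ⟨mem_univ _, hmax⟩⟩
  have hcount : ∀ S ∈ powersetCard a (Iio i),
      (#{σ : α ≃ β | ∀ j ∈ S, IsMaxOn σ (Set.Icc j i) j} : ℝ) ≤
        Fintype.card (α ≃ β) * ∏ j ∈ S, f j := fun S hS => by
    have hpos : ∀ j ∈ S, (0 : ℝ) < #(Icc j i) := fun j hj => by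
      have := mem_Iio.mp ((mem_powersetCard.mp hS).1 hj)
      exact_mod_cast card_pos.mpr ⟨j, mem_Icc.mpr ⟨le_rfl, this.le⟩⟩
    rw [prod_inv_distrib, ← div_eq_mul_inv, le_div_iff₀ (prod_pos hpos)]
    exact_mod_cast card_forall_isMaxOn_Icc_mul_prod_le i S
  calc (#(recordsBefore β i a) : ℝ) * a !
      ≤ (∑ S ∈ powersetCard a (Iio i), Fintype.card (α ≃ β) * ∏ j ∈ S, f j) * a ! := by
        gcongr
        exact hunion.trans (sum_le_sum hcount)
    _ = Fintype.card (α ≃ β) * (a ! * ∑ S ∈ powersetCard a (Iio i), ∏ j ∈ S, f j) := by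
        rw [← mul_sum]; ring
    _ ≤ Fintype.card (α ≃ β) * (∑ j ∈ Iio i, f j) ^ a := by
        gcongr
        exact factorial_mul_sum_powersetCard_prod_le_pow _ (fun _ _ => by positivity) a
    _ ≤ Fintype.card (α ≃ β) * Real.log (Fintype.card α) ^ a := by
        refine mul_le_mul_of_nonneg_left (pow_le_pow_left₀ ?_ ?_ a) (Nat.cast_nonneg _)
        · exact sum_nonneg fun j _ => inv_nonneg.mpr (Nat.cast_nonneg _)
        · exact sum_Iio_inv_card_Icc_le_log i

theorem card_recordsAfter_mul_factorial_le [LocallyFiniteOrderTop α] (i : α) (a : ℕ) :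
    (#(recordsAfter β i a) : ℝ) * a ! ≤
      Fintype.card (α ≃ β) * Real.log (Fintype.card α) ^ a := by
  let e : (α ≃ β) ≃ (αᵒᵈ ≃ β) := Equiv.equivCongr OrderDual.toDual (Equiv.refl β)
  have h := card_recordsBefore_mul_factorial_le (β := β) (OrderDual.toDual i) a
  rw [Fintype.card_orderDual, ← Fintype.card_congr e] at h
  convert h using 3
  refine card_equiv e fun σ => ?_
  rw [mem_recordsAfter, mem_recordsBefore]
  simp [Iio_toDual, subset_map_iff, isMaxOn_iff, OrderDual.forall, e, imp.swap (a := i ≤ _)]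

end Records

theorem two_mul_mul_log_pow_le {n : ℕ} (hn : 2 ≤ n) {c : ℝ} (hc : 1 ≤ c) {a : ℕ}
    (ha : 9 * c * Real.log n ≤ a) :
    2 * n * Real.log n ^ a ≤ (n : ℝ) ^ (-c) * a ! := by
  have hn₀ : (0 : ℝ) < n := by positivity
  set L := Real.log n
  have hL : 0 < L := Real.log_pos (by exact_mod_cast hn)
  have h2n : (2 * n : ℝ) ≤ Real.exp (2 * L) := by
    rw [show 2 * L = L + L by ring, Real.exp_add, Real.exp_log hn₀]
    gcongr
    exact_mod_cast hn
  have hexp2 : Real.exp 2 < 9 := by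
    have := Real.exp_one_lt_three
    rw [show (2 : ℝ) = 1 + 1 by norm_num, Real.exp_add]
    nlinarith [Real.exp_pos 1]
  have hpow : L ^ a ≤ a ! * Real.exp (Real.exp 2 * L - 2 * a) := by
    have h := Real.pow_div_factorial_le_exp (x := Real.exp 2 * L) (by positivity) a
    rw [div_le_iff₀ (by positivity), mul_pow, ← Real.exp_nat_mul] at h
    rw [Real.exp_sub, ← mul_div_assoc, le_div_iff₀ (Real.exp_pos _), mul_comm 2 (a : ℝ)]
    linarith
  calc 2 * n * L ^ a ≤ Real.exp (2 * L) * (a ! * Real.exp (Real.exp 2 * L - 2 * a)) := by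
        gcongr
    _ = a ! * Real.exp (2 * L + Real.exp 2 * L - 2 * a) := by
        rw [add_sub_assoc, Real.exp_add]; ring
    _ ≤ a ! * Real.exp (L * -c) := by
        gcongr
        nlinarith
    _ = (n : ℝ) ^ (-c) * a ! := by rw [Real.rpow_def_of_pos hn₀]; ring

section Permutations

variable {n : ℕ}

def priorities (σ : Equiv.Perm (Fin n)) : List ℝ := List.ofFn fun i => ((σ i : ℕ) : ℝ)

theorem length_priorities (σ : Equiv.Perm (Fin n)) : (priorities σ).length = n :=
  List.length_ofFn

theorem nodup_priorities (σ : Equiv.Perm (Fin n)) : (priorities σ).Nodup :=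
  List.nodup_ofFn.mpr fun x y h => σ.injective (Fin.ext (by exact_mod_cast h))

theorem getD_priorities (σ : Equiv.Perm (Fin n)) (m : Fin n) :
    (priorities σ).getD m 0 = (σ m : ℕ) := by
  simp [priorities]

theorem Dominates.isMaxOn {σ : Equiv.Perm (Fin n)} {j i : Fin n}
    (h : Dominates (priorities σ) j i) : IsMaxOn σ (Set.uIcc j i) j := by
  refine isMaxOn_iff.mpr fun x hx => ?_
  rcases eq_or_ne x j with rfl | hxj
  · exact le_rfl
  have hx' : (x : ℕ) ∈ Set.uIcc (j : ℕ) i := by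
    simpa only [Set.mem_uIcc, Fin.le_def] using hx
  have hlt := h.getD_lt_of_mem_uIcc x hx' (Fin.val_ne_of_ne hxj)
  rw [getD_priorities, getD_priorities, Nat.cast_lt] at hlt
  exact hlt.le

theorem exists_mem_records_of_lt_contractRounds {σ : Equiv.Perm (Fin n)} {a : ℕ}
    (h : 2 * a < contractRounds (priorities σ)) :
    ∃ i, σ ∈ recordsBefore (Fin n) i a ∨ σ ∈ recordsAfter (Fin n) i a := by
  have hne : contractStep^[2 * a] (priorities σ) ≠ [] := fun h0 => h.not_ge (Nat.sInf_le h0)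
  obtain ⟨i, hi, S, hcard, hdom⟩ :=
    exists_finset_dominates_of_iterate_ne_nil (2 * a) (nodup_priorities σ) hne
  rw [length_priorities] at hi
  have hS : ∀ j ∈ S, j < n := fun j hj => length_priorities σ ▸ (hdom j hj).left_lt_length
  set T := S.attachFin hS
  have hT : ∀ j ∈ T, Dominates (priorities σ) j (⟨i, hi⟩ : Fin n) := fun j hj =>
    hdom j (mem_attachFin hS |>.mp hj)
  have hsplit : #T ≤ #{j ∈ T | j < ⟨i, hi⟩} + #{j ∈ T | ⟨i, hi⟩ < j} := by
    refine (card_le_card fun j hj => ?_).trans (card_union_le _ _)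
    have : (j : ℕ) ≠ i := (hT j hj).ne
    simp only [mem_union, mem_filter, hj, true_and, Fin.lt_def]
    omega
  have hTcard : #T = 2 * a := by rw [card_attachFin, hcard]
  refine ⟨⟨i, hi⟩, ?_⟩
  rcases (show a ≤ #{j ∈ T | j < ⟨i, hi⟩} ∨ a ≤ #{j ∈ T | ⟨i, hi⟩ < j} by omega) with hlo | hhi
  · obtain ⟨U, hU, hUcard⟩ := exists_subset_card_eq hlo
    refine Or.inl (mem_recordsBefore.mpr ⟨U, fun j hj => ?_, hUcard, fun j hj => ?_⟩) <;>
      obtain ⟨hjT, hji⟩ := mem_filter.mp (hU hj)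
    · exact mem_Iio.mpr hji
    · exact Set.uIcc_of_le hji.le ▸ (hT j hjT).isMaxOn
  · obtain ⟨U, hU, hUcard⟩ := exists_subset_card_eq hhi
    refine Or.inr (mem_recordsAfter.mpr ⟨U, fun j hj => ?_, hUcard, fun j hj => ?_⟩) <;>
      obtain ⟨hjT, hij⟩ := mem_filter.mp (hU hj)
    · exact mem_Ioi.mpr hij
    · exact Set.uIcc_of_ge hij.le ▸ (hT j hjT).isMaxOn

theorem card_lt_contractRounds_mul_factorial_le (a : ℕ) :
    (#{σ : Equiv.Perm (Fin n) | 2 * a < contractRounds (priorities σ)} : ℝ) * a ! ≤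
      2 * n * n ! * Real.log n ^ a := by
  have hunion : #{σ : Equiv.Perm (Fin n) | 2 * a < contractRounds (priorities σ)} ≤
      ∑ i : Fin n, (#(recordsBefore (Fin n) i a) + #(recordsAfter (Fin n) i a)) := by
    refine (card_le_card fun σ hσ => ?_).trans
      (card_biUnion_le.trans (sum_le_sum fun i _ => card_union_le _ _))
    obtain ⟨i, hi⟩ := exists_mem_records_of_lt_contractRounds (mem_filter.mp hσ).2
    exact mem_biUnion.mpr ⟨i, mem_univ _, mem_union.mpr hi⟩
  have hperm : Fintype.card (Fin n ≃ Fin n) = n ! := by simp [Fintype.card_equiv (Equiv.refl _)]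
  calc _ ≤ ∑ i : Fin n, ((#(recordsBefore (Fin n) i a) : ℝ) * a ! +
        (#(recordsAfter (Fin n) i a) : ℝ) * a !) := by
        simp_rw [← add_mul]
        rw [← sum_mul]
        gcongr
        exact_mod_cast hunion
    _ ≤ ∑ _i : Fin n, 2 * (n ! * Real.log n ^ a) := by
        refine sum_le_sum fun i _ => ?_
        have hbefore := card_recordsBefore_mul_factorial_le (β := Fin n) i a
        have hafter := card_recordsAfter_mul_factorial_le (β := Fin n) i a
        rw [hperm, Fintype.card_fin] at hbefore hafter
        linarith
    _ = 2 * n * n ! * Real.log n ^ a := by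
        rw [sum_const, card_univ, Fintype.card_fin, nsmul_eq_mul]
        ring

theorem card_lt_contractRounds_le (hn : 2 ≤ n) {c : ℝ} (hc : 1 ≤ c) {a : ℕ}
    (ha : 9 * c * Real.log n ≤ a) :
    (#{σ : Equiv.Perm (Fin n) | 2 * a < contractRounds (priorities σ)} : ℝ) ≤
      (n : ℝ) ^ (-c) * n ! := by
  refine le_of_mul_le_mul_right ?_ (Nat.cast_pos.mpr a.factorial_pos)
  calc _ ≤ 2 * n * n ! * Real.log n ^ a := card_lt_contractRounds_mul_factorial_le a
    _ = n ! * (2 * n * Real.log n ^ a) := by ring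
    _ ≤ n ! * ((n : ℝ) ^ (-c) * a !) :=
      mul_le_mul_of_nonneg_left (two_mul_mul_log_pow_le hn hc ha) (by positivity)
    _ = _ := by ring

end Permutations

theorem one_sub_mul_card_le_card_filter {α : Type*} [Fintype α] (p : α → Prop) [DecidablePred p]
    {ε : ℝ} (h : (#{x | ¬ p x} : ℝ) ≤ ε * Fintype.card α) :
    (1 - ε) * Fintype.card α ≤ #{x | p x} := by
  have hsplit : (#{x | p x} : ℝ) + #{x | ¬ p x} = Fintype.card α := by
    exact_mod_cast card_filter_add_card_filter_not (s := univ) p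
  linarith

/-- Under a uniformly random assignment of distinct priorities to a list of `n`
elements, the number of rounds of parallel list contraction is `O(log n)` with
high probability: there is a constant `C` such that for every `c ≥ 1` and `n ≥ 2`,
with probability at least `1 - n^(-c)` over the random permutation of priorities,
the number of rounds is at most `C·c·log n`. -/
theorem list_contraction_rounds_whp :
    ∃ C : ℝ, 0 < C ∧ ∀ (c : ℝ), 1 ≤ c → ∀ n : ℕ, 2 ≤ n →
      (1 - (n : ℝ) ^ (-c)) * (Fintype.card (Equiv.Perm (Fin n))) ≤
        ((Finset.univ : Finset (Equiv.Perm (Fin n))).filter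
          (fun σ => (contractRounds (List.ofFn fun i : Fin n => ((σ i : ℕ) : ℝ)) : ℝ)
            ≤ C * c * Real.log n)).card := by
  refine ⟨21, by norm_num, fun c hc n hn => one_sub_mul_card_le_card_filter _ ?_⟩
  set a := ⌈9 * c * Real.log n⌉₊
  have hround : (2 * a : ℝ) ≤ 21 * c * Real.log n := by
    have hlog : Real.log 2 ≤ Real.log n := Real.log_le_log two_pos (by exact_mod_cast hn)
    have ha := Nat.ceil_lt_add_one (show 0 ≤ 9 * c * Real.log n by positivity)
    nlinarith [Real.log_two_gt_d9]
  rw [Fintype.card_perm, Fintype.card_fin]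
  refine le_trans ?_ (card_lt_contractRounds_le hn hc (Nat.le_ceil _))
  gcongr with σ
  rw [not_le]
  exact fun h => by exact_mod_cast hround.trans_lt h
end

section
/- Applying the swaps of the parallel Knuth shuffle in any round order consistent with the dependence constraints yields the same final permutation as the sequential Knuth shuffle: if in each round a set of swaps (i, H[i]) is executed simultaneously such that the source and destination index sets of the executed swaps are pairwise disjoint, and a swap (i, H[i]) is executed only after every swap (j, H[j]) with j > i and {j, H[j]} ∩ {i, H[i]} ≠ ∅ has been executed, then the final array equals the result of executing swaps sequentially for i = n down to 1. -/
/-!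
Both sides are products of the same transpositions, in two orders. The dependence condition
says that whenever the schedule runs `i` no later than `j` although `i < j`, their swaps
touch disjoint positions and hence commute. Such commuting adjacent pairs are exactly what is
needed to bubble the schedule's product into the descending order of the sequential shuffle.
-/

/-- The swap performed for index `i` of the Knuth shuffle: the transposition of
positions `i` and `H i` (the identity when they coincide). -/
def swapOf {n : ℕ} (H : ∀ i : Fin n, Fin (i.1 + 1)) (i : Fin n) : Equiv.Perm (Fin n) :=
  Equiv.swap i (Fin.castLE i.isLt (H i))

/-- The set of positions touched by the swap for index `i`: `{i, H i}`. -/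
def touched {n : ℕ} (H : ∀ i : Fin n, Fin (i.1 + 1)) (i : Fin n) : Finset (Fin n) :=
  {i, Fin.castLE i.isLt (H i)}

theorem Equiv.swap_commute_swap {α : Type*} [DecidableEq α] {a b c d : α}
    (h : Disjoint ({a, b} : Finset α) {c, d}) : Commute (swap a b) (swap c d) := by
  simp only [Finset.disjoint_insert_left, Finset.disjoint_singleton_left, Finset.mem_insert,
    Finset.mem_singleton, not_or] at h
  refine Perm.Disjoint.commute fun x => ?_
  by_cases hx : x = a ∨ x = b
  · exact .inr (swap_apply_of_ne_of_ne (by grind) (by grind))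
  · exact .inl (swap_apply_of_ne_of_ne (by grind) (by grind))

theorem List.Perm.prod_map_eq_of_pairwise {α M : Type*} [Monoid M] {R : α → α → Prop}
    (f : α → M) {l₁ l₂ : List α} (hperm : l₁.Perm l₂) (hl₂ : l₂.Pairwise R)
    (hcomm : l₁.Pairwise fun a b => R b a → Commute (f a) (f b)) :
    (l₁.map f).prod = (l₂.map f).prod := by
  induction l₂ generalizing l₁ with
  | nil => simp [hperm.eq_nil]
  | cons m t ih =>
    obtain ⟨u, v, rfl⟩ := List.append_of_mem (hperm.mem_iff.2 mem_cons_self)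
    have hperm' : (u ++ v).Perm t := (perm_cons m).1 (perm_middle.symm.trans hperm)
    -- `m` comes first in `l₂`, so it commutes with everything placed before it in `l₁`
    have hm : Commute (f m) (u.map f).prod := by
      refine Commute.list_prod_right _ _ fun x hx => ?_
      obtain ⟨a, ha, rfl⟩ := mem_map.1 hx
      refine ((pairwise_append.1 hcomm).2.2 a ha m mem_cons_self ?_).symm
      exact rel_of_pairwise_cons hl₂ (hperm'.subset (mem_append_left v ha))
    calc ((u ++ m :: v).map f).prod = f m * ((u ++ v).map f).prod := by
          simp only [map_append, map_cons, prod_append, prod_cons]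
          rw [← mul_assoc, ← hm.eq, mul_assoc]
      _ = ((m :: t).map f).prod := by
          rw [ih hperm' hl₂.of_cons (hcomm.sublist ((sublist_cons_self m v).append_left u)),
            map_cons, prod_cons]

theorem List.pairwise_flatten_of_getD {α : Type*} {R : α → α → Prop} {L : List (List α)}
    (h : ∀ p q, p ≤ q → q < L.length → ∀ a ∈ L.getD p [], ∀ b ∈ L.getD q [], R a b) :
    L.flatten.Pairwise R := by
  refine pairwise_flatten.2 ⟨fun r hr => ?_, pairwise_iff_getElem.2 fun p q hp hq hpq => ?_⟩
  · obtain ⟨p, hp, rfl⟩ := getElem_of_mem hr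
    refine pairwise_of_forall_mem_list fun a ha b hb => h p p le_rfl hp a ?_ b ?_ <;>
      rwa [getD_eq_getElem _ _ hp]
  · simpa only [getD_eq_getElem _ _ hq, getD_eq_getElem _ _ hp] using h p q hpq.le hq

theorem List.foldl_mul_eq_prod_map {α M : Type*} [Monoid M] (f : α → M) (l : List α) :
    l.foldl (fun x a => x * f a) 1 = (l.map f).prod := by
  rw [prod_eq_foldl, foldl_map]

theorem parallel_knuth_shuffle_schedule_correct_general (n : ℕ)
    (H : ∀ i : Fin n, Fin (i.1 + 1)) (schedule : List (List (Fin n)))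
    (hpart : schedule.flatten.Perm (List.finRange n))
    (hdep : ∀ r₁ r₂ : ℕ, r₁ ≤ r₂ → r₂ < schedule.length →
      ∀ i ∈ schedule.getD r₁ [], ∀ j ∈ schedule.getD r₂ [], i < j →
        Disjoint (touched H i) (touched H j)) :
    schedule.flatten.foldl (fun A i => A * swapOf H i) 1 =
      ((List.finRange n).reverse).foldl (fun A i => A * swapOf H i) 1 := by
  rw [List.foldl_mul_eq_prod_map, List.foldl_mul_eq_prod_map]
  refine (hpart.trans (List.reverse_perm _).symm).prod_map_eq_of_pairwise _
    (List.pairwise_reverse.2 (List.pairwise_lt_finRange n)) ?_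
  exact (List.pairwise_flatten_of_getD hdep).imp fun hdisj hlt =>
    Equiv.swap_commute_swap (hdisj hlt)

/-- Any round schedule of the parallel Knuth shuffle consistent with the
dependence constraints produces the sequential result: if the schedule executes
every swap exactly once, the swaps executed in the same round touch pairwise
disjoint sets of positions, and a swap `(i, H i)` is executed only after every
swap `(j, H j)` with `j > i` touching a common position (so whenever `i` is
scheduled no later than `j`, the swaps of `i` and `j` with `i < j` are disjoint),
then the final array equals the result of executing the swaps sequentially for
`i = n-1` down to `0` starting from the identity array. -/
theorem parallel_knuth_shuffle_schedule_correct (n : ℕ)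
    (H : ∀ i : Fin n, Fin (i.1 + 1)) (schedule : List (List (Fin n)))
    (hpart : schedule.flatten.Perm (List.finRange n))
    (hdisj : ∀ r ∈ schedule, r.Pairwise fun i j => Disjoint (touched H i) (touched H j))
    (hdep : ∀ r₁ r₂ : ℕ, r₁ ≤ r₂ → r₂ < schedule.length →
      ∀ i ∈ schedule.getD r₁ [], ∀ j ∈ schedule.getD r₂ [], i < j →
        Disjoint (touched H i) (touched H j)) :
    schedule.flatten.foldl (fun A i => A * swapOf H i) 1 =
      ((List.finRange n).reverse).foldl (fun A i => A * swapOf H i) 1 :=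
  parallel_knuth_shuffle_schedule_correct_general n H schedule hpart hdep
end
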